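/- arXiv:2302.04941 — 3 statements merged into one kernel-verified Lean document; each statement's English description precedes it below -/
import Mathlib

section
/- Suppose f : ℝ → ℝ is continuous on [a-δ, a+δ], f(a) = 0, and |f'(x)| ≥ 2ε₀ on [a-δ, a+δ] for some ε₀ > 0 with f differentiable there. If g is C¹ with sup over [a-δ,a+δ] of |g - f| + |g' - f'| < ε where 0 < ε < min(ε₀, δ·ε₀), then g has exactly one zero in (a-δ, a+δ), and that zero is hyperbolic (g' ≠ 0 there). -/
/-!
Since `|g' - f'| < ε < ε₀` and `|f'| ≥ 2ε₀`, we get `|g'| > ε₀` on `[a - δ, a + δ]`; by Darboux's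
theorem `g'` then has constant sign there, so `g` is strictly monotone and has at most one zero,
which is hyperbolic. As `|g a| ≤ |g a - f a| < ε < δ ε₀`, the mean value theorem shows that `g`
changes sign between `a - δ` and `a + δ`, which gives the zero.
-/

open Set

variable {g : ℝ → ℝ} {a δ c : ℝ}

theorem existsUnique_mem_Ioo_eq_zero_of_lt_deriv (hδ : 0 < δ)
    (hg : ContinuousOn g (Icc (a - δ) (a + δ)))
    (hg' : DifferentiableOn ℝ g (Ioo (a - δ) (a + δ)))
    (hc : ∀ x ∈ Ioo (a - δ) (a + δ), c < deriv g x) (hga : |g a| < c * δ) :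
    ∃! y, y ∈ Ioo (a - δ) (a + δ) ∧ g y = 0 := by
  have hc₀ : 0 < c := pos_of_mul_pos_left ((abs_nonneg _).trans_lt hga) hδ.le
  have ha : a ∈ Icc (a - δ) (a + δ) := ⟨by linarith, by linarith⟩
  have hmono : StrictMonoOn g (Icc (a - δ) (a + δ)) :=
    strictMonoOn_of_deriv_pos (convex_Icc _ _) hg fun x hx ↦
      hc₀.trans (hc x (by rwa [interior_Icc] at hx))
  have hslope := (convex_Icc (a - δ) (a + δ)).mul_sub_lt_image_sub_of_lt_deriv hg
    (by rwa [interior_Icc]) (by rwa [interior_Icc])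
  have hleft := hslope (a - δ) (left_mem_Icc.2 (by linarith)) a ha (by linarith)
  have hright := hslope a ha (a + δ) (right_mem_Icc.2 (by linarith)) (by linarith)
  have hsign : (0 : ℝ) ∈ Ioo (g (a - δ)) (g (a + δ)) := by
    rw [abs_lt] at hga
    constructor <;> nlinarith
  obtain ⟨y, hy, hgy⟩ := intermediate_value_Ioo (by linarith) hg hsign
  refine ⟨y, ⟨hy, hgy⟩, fun z ⟨hz, hgz⟩ ↦ ?_⟩
  exact hmono.injOn (Ioo_subset_Icc_self hz) (Ioo_subset_Icc_self hy) (hgz.trans hgy.symm)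

theorem existsUnique_mem_Ioo_eq_zero_of_lt_abs_deriv (hδ : 0 < δ)
    (hg : DifferentiableOn ℝ g (Icc (a - δ) (a + δ)))
    (hc : ∀ x ∈ Ioo (a - δ) (a + δ), c < |deriv g x|) (hga : |g a| < c * δ) :
    ∃! y, y ∈ Ioo (a - δ) (a + δ) ∧ g y = 0 := by
  have hc₀ : 0 < c := pos_of_mul_pos_left ((abs_nonneg _).trans_lt hga) hδ.le
  have hg' : DifferentiableOn ℝ g (Ioo (a - δ) (a + δ)) := hg.mono Ioo_subset_Icc_self
  have hderiv : ∀ x ∈ Ioo (a - δ) (a + δ), HasDerivWithinAt g (deriv g x) (Ioo (a - δ) (a + δ)) x :=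
    fun x hx ↦ (hg'.differentiableAt (isOpen_Ioo.mem_nhds hx)).hasDerivAt.hasDerivWithinAt
  have hne : ∀ x ∈ Ioo (a - δ) (a + δ), deriv g x ≠ 0 := fun x hx h ↦ by
    have := hc x hx
    rw [h, abs_zero] at this
    linarith
  rcases hasDerivWithinAt_forall_lt_or_forall_gt_of_forall_ne (convex_Ioo _ _) hderiv hne
    with hneg | hpos
  · have := existsUnique_mem_Ioo_eq_zero_of_lt_deriv (g := -g) hδ hg.continuousOn.neg hg'.neg
      (fun x hx ↦ by simpa [deriv.neg, abs_of_neg (hneg x hx)] using hc x hx)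
      (by simpa using hga)
    simpa using this
  · exact existsUnique_mem_Ioo_eq_zero_of_lt_deriv hδ hg.continuousOn hg'
      (fun x hx ↦ by simpa [abs_of_pos (hpos x hx)] using hc x hx) hga

theorem perturbed_unique_hyperbolic_zero_general (f g : ℝ → ℝ) (a δ ε₀ ε : ℝ)
    (hg : ContDiff ℝ 1 g)
    (hza : f a = 0)
    (hd : ∀ x ∈ Set.Icc (a - δ) (a + δ), 2 * ε₀ ≤ |deriv f x|)
    (hε : 0 < ε ∧ ε < min ε₀ (δ * ε₀))
    (hclose : ∀ x ∈ Set.Icc (a - δ) (a + δ),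
      |g x - f x| + |deriv g x - deriv f x| < ε) :
    (∃! y, y ∈ Set.Ioo (a - δ) (a + δ) ∧ g y = 0) ∧
      ∀ y ∈ Set.Ioo (a - δ) (a + δ), g y = 0 → deriv g y ≠ 0 := by
  obtain ⟨hε, hεε₀, hεδ⟩ : 0 < ε ∧ ε < ε₀ ∧ ε < δ * ε₀ := by simpa using hε
  have hε₀ : 0 < ε₀ := hε.trans hεε₀
  have hδ : 0 < δ := pos_of_mul_pos_left (hε.trans hεδ) hε₀.le
  have hdg : ∀ x ∈ Icc (a - δ) (a + δ), ε₀ < |deriv g x| := fun x hx ↦ by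
    have hfg := abs_sub_abs_le_abs_sub (deriv f x) (deriv g x)
    rw [abs_sub_comm] at hfg
    linarith [hclose x hx, hd x hx, abs_nonneg (g x - f x)]
  have hga : |g a| < ε₀ * δ := by
    have hclose_a := hclose a ⟨by linarith, by linarith⟩
    rw [hza, sub_zero] at hclose_a
    linarith [abs_nonneg (deriv g a - deriv f a)]
  refine ⟨existsUnique_mem_Ioo_eq_zero_of_lt_abs_deriv hδ
    (hg.differentiable one_ne_zero).differentiableOn
    (fun x hx ↦ hdg x (Ioo_subset_Icc_self hx)) hga, fun y hy _ h ↦ ?_⟩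
  have := hdg y (Ioo_subset_Icc_self hy)
  rw [h, abs_zero] at this
  linarith

theorem perturbed_unique_hyperbolic_zero (f g : ℝ → ℝ) (a δ ε₀ ε : ℝ)
    (hδ : 0 < δ) (hε₀ : 0 < ε₀)
    (hf : ContDiffOn ℝ 1 f (Set.Icc (a - δ) (a + δ)))
    (hg : ContDiff ℝ 1 g)
    (hza : f a = 0)
    (hd : ∀ x ∈ Set.Icc (a - δ) (a + δ), 2 * ε₀ ≤ |deriv f x|)
    (hε : 0 < ε ∧ ε < min ε₀ (δ * ε₀))
    (hclose : ∀ x ∈ Set.Icc (a - δ) (a + δ),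
      |g x - f x| + |deriv g x - deriv f x| < ε) :
    (∃! y, y ∈ Set.Ioo (a - δ) (a + δ) ∧ g y = 0) ∧
      ∀ y ∈ Set.Ioo (a - δ) (a + δ), g y = 0 → deriv g y ≠ 0 :=
  perturbed_unique_hyperbolic_zero_general f g a δ ε₀ ε hg hza hd hε hclose
end

section
/- If f : ℝ → ℝ is C¹ with f(x*) = 0, f'(x*) = 0, and f > 0 on a punctured neighborhood (x*-δ, x*+δ) \ {x*}, then for every ε > 0 there exists a C¹ function g with sup|g-f| + sup|g'-f'| < ε, g = f outside (x*-δ, x*+δ), and g > 0 on all of (x*-δ, x*+δ). -/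
/-! Add to `f` a small multiple `σ φ` of a smooth bump `φ` with `0 ≤ φ ≤ 1`, `φ = 1` near `x₀` and
support `(x₀ - δ, x₀ + δ)`. The perturbation lifts the zero `f x₀ = 0` to `σ > 0`, keeps `f > 0`
elsewhere on the interval, leaves `f` untouched outside it, and moves `f` and `f'` by at most
`σ` and `σ · sup |φ'|`. -/

open Metric

theorem HasCompactSupport.exists_forall_abs_deriv_le {ψ : ℝ → ℝ} (hψ : ContDiff ℝ 1 ψ)
    (hc : HasCompactSupport ψ) : ∃ M, 0 ≤ M ∧ ∀ x, |deriv ψ x| ≤ M := by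
  obtain ⟨M, hM⟩ := hc.deriv.exists_bound_of_continuous (hψ.continuous_deriv le_rfl)
  exact ⟨M, (norm_nonneg _).trans (hM 0), hM⟩

theorem iSup_abs_add_mul_sub_add_iSup_abs_deriv_sub_le {f ψ : ℝ → ℝ} (hf : Differentiable ℝ f)
    (hψ : Differentiable ℝ ψ) {σ A B : ℝ} (hσ : 0 ≤ σ) (hA : ∀ x, |ψ x| ≤ A)
    (hB : ∀ x, |deriv ψ x| ≤ B) :
    (⨆ x, |(f x + σ * ψ x) - f x|) +
      (⨆ x, |deriv (fun y ↦ f y + σ * ψ y) x - deriv f x|) ≤ σ * (A + B) := by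
  have hvalue : (⨆ x, |(f x + σ * ψ x) - f x|) ≤ σ * A := by
    refine ciSup_le fun x ↦ ?_
    rw [add_sub_cancel_left, abs_mul, abs_of_nonneg hσ]
    exact mul_le_mul_of_nonneg_left (hA x) hσ
  have hderiv : (⨆ x, |deriv (fun y ↦ f y + σ * ψ y) x - deriv f x|) ≤ σ * B := by
    refine ciSup_le fun x ↦ ?_
    rw [deriv_fun_add (hf x) ((hψ x).const_mul σ), deriv_const_mul σ (hψ x),
      add_sub_cancel_left, abs_mul, abs_of_nonneg hσ]
    exact mul_le_mul_of_nonneg_left (hB x) hσ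
  linarith

theorem annihilate_nonhyperbolic_same_sign_general (f : ℝ → ℝ) (x₀ δ : ℝ)
    (hδ : 0 < δ) (hf : ContDiff ℝ 1 f)
    (hz : f x₀ = 0)
    (hpos : ∀ x ∈ Set.Ioo (x₀ - δ) (x₀ + δ), x ≠ x₀ → 0 < f x) :
    ∀ ε > (0 : ℝ), ∃ g : ℝ → ℝ, ContDiff ℝ 1 g ∧
      (⨆ x : ℝ, |g x - f x|) + (⨆ x : ℝ, |deriv g x - deriv f x|) < ε ∧
      (∀ x, x ∉ Set.Ioo (x₀ - δ) (x₀ + δ) → g x = f x) ∧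
      ∀ x ∈ Set.Ioo (x₀ - δ) (x₀ + δ), 0 < g x := by
  intro ε hε
  let φ : ContDiffBump x₀ := ⟨δ / 2, δ, half_pos hδ, half_lt_self hδ⟩
  obtain ⟨M, hM0, hM⟩ := φ.hasCompactSupport.exists_forall_abs_deriv_le φ.contDiff
  set σ := ε / (2 * (1 + M)) with hσ_def
  have hσ : 0 < σ := by positivity
  refine ⟨fun x ↦ f x + σ * φ x, hf.add (contDiff_const.mul φ.contDiff), ?_,
    fun x hx ↦ ?_, fun x hx ↦ ?_⟩
  · calc _ ≤ σ * (1 + M) :=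
          iSup_abs_add_mul_sub_add_iSup_abs_deriv_sub_le (hf.differentiable one_ne_zero)
            (φ.contDiff.differentiable one_ne_zero) hσ.le
            (fun x ↦ (abs_of_nonneg φ.nonneg).trans_le φ.le_one) hM
      _ = ε / 2 := by rw [hσ_def]; field_simp
      _ < ε := half_lt_self hε
  · rw [← Real.ball_eq_Ioo, mem_ball, not_lt] at hx
    show f x + σ * φ x = f x
    rw [φ.zero_of_le_dist hx, mul_zero, add_zero]
  · show 0 < f x + σ * φ x
    rcases eq_or_ne x x₀ with rfl | hne
    · rw [hz, φ.one_of_mem_closedBall (mem_closedBall_self φ.rIn_pos.le), zero_add, mul_one]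
      exact hσ
    · exact add_pos_of_pos_of_nonneg (hpos x hx hne) (mul_nonneg hσ.le φ.nonneg)

theorem annihilate_nonhyperbolic_same_sign (f : ℝ → ℝ) (x₀ δ : ℝ)
    (hδ : 0 < δ) (hf : ContDiff ℝ 1 f)
    (hz : f x₀ = 0) (hd : deriv f x₀ = 0)
    (hpos : ∀ x ∈ Set.Ioo (x₀ - δ) (x₀ + δ), x ≠ x₀ → 0 < f x) :
    ∀ ε > (0 : ℝ), ∃ g : ℝ → ℝ, ContDiff ℝ 1 g ∧
      (⨆ x : ℝ, |g x - f x|) + (⨆ x : ℝ, |deriv g x - deriv f x|) < ε ∧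
      (∀ x, x ∉ Set.Ioo (x₀ - δ) (x₀ + δ) → g x = f x) ∧
      ∀ x ∈ Set.Ioo (x₀ - δ) (x₀ + δ), 0 < g x :=
  annihilate_nonhyperbolic_same_sign_general f x₀ δ hδ hf hz hpos
end

section
/- For the function f(x) = (x - x*)³, for every ε > 0 there exists a C¹ function g with ‖g - f‖ in C¹-norm on [x*-δ, x*+δ] less than ε such that g has exactly three zeros in (x*-δ, x*+δ), all hyperbolic, with g'(x*) < 0 at the middle zero x* and g' > 0 at the two outer zeros. -/
/-!
Tilting the cubic by a small linear term, `g y = (y - x₀)³ - s² (y - x₀) = (y - x₀ - s)(y - x₀)(y - x₀ + s)`,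
splits the degenerate triple zero at `x₀` into three simple zeros `x₀ - s, x₀, x₀ + s`, with
`g' = 3 (y - x₀)² - s²` equal to `-s²` in the middle and `2 s²` at the outer zeros.
The `C¹` distance from the cubic on `[x₀ - δ, x₀ + δ]` is at most `s² (δ + 1)`, which is small for small `s`.
-/

open Filter Topology Set

def tiltedCubic (x₀ s y : ℝ) : ℝ := (y - x₀) ^ 3 - s ^ 2 * (y - x₀)

theorem exists_small_tilt {δ ε : ℝ} (hδ : 0 < δ) (hε : 0 < ε) :
    ∃ s, 0 < s ∧ s < δ ∧ s ^ 2 * (δ + 1) < ε := by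
  have hsmall : Tendsto (fun s : ℝ => s ^ 2 * (δ + 1)) (𝓝[>] 0) (𝓝 0) := by
    have : Continuous fun s : ℝ => s ^ 2 * (δ + 1) := by fun_prop
    simpa using (this.tendsto 0).mono_left nhdsWithin_le_nhds
  have hpos : ∀ᶠ s in 𝓝[>] (0 : ℝ), 0 < s := eventually_mem_nhdsWithin
  have hltδ : ∀ᶠ s in 𝓝[>] (0 : ℝ), s < δ := nhdsWithin_le_nhds (eventually_lt_nhds hδ)
  exact (hpos.and (hltδ.and (hsmall.eventually (gt_mem_nhds hε)))).exists

section

variable (x₀ s : ℝ)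

theorem hasDerivAt_sub_pow_three (x : ℝ) :
    HasDerivAt (fun y => (y - x₀) ^ 3) (3 * (x - x₀) ^ 2) x :=
  (((hasDerivAt_id' x).sub_const x₀).fun_pow 3).congr_deriv (by norm_num)

theorem hasDerivAt_tiltedCubic (x : ℝ) :
    HasDerivAt (tiltedCubic x₀ s) (3 * (x - x₀) ^ 2 - s ^ 2) x :=
  ((hasDerivAt_sub_pow_three x₀ x).fun_sub
    (((hasDerivAt_id' x).sub_const x₀).const_mul (s ^ 2))).congr_deriv (by ring)

theorem deriv_tiltedCubic (x : ℝ) : deriv (tiltedCubic x₀ s) x = 3 * (x - x₀) ^ 2 - s ^ 2 :=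
  (hasDerivAt_tiltedCubic x₀ s x).deriv

theorem contDiff_tiltedCubic : ContDiff ℝ 1 (tiltedCubic x₀ s) := by
  unfold tiltedCubic
  fun_prop

theorem tiltedCubic_eq_zero_iff (y : ℝ) :
    tiltedCubic x₀ s y = 0 ↔ y = x₀ - s ∨ y = x₀ ∨ y = x₀ + s := by
  have factor : tiltedCubic x₀ s y = (y - (x₀ - s)) * ((y - x₀) * (y - (x₀ + s))) := by
    unfold tiltedCubic
    ring
  simp only [factor, mul_eq_zero, sub_eq_zero]

theorem tiltedCubic_zeros_Ioo {δ : ℝ} (hs : 0 < s) (hsδ : s < δ) :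
    {y ∈ Ioo (x₀ - δ) (x₀ + δ) | tiltedCubic x₀ s y = 0} = {x₀ - s, x₀, x₀ + s} := by
  ext y
  simp only [mem_ofPred_eq, tiltedCubic_eq_zero_iff, mem_Ioo, mem_insert_iff, mem_singleton_iff]
  constructor
  · exact And.right
  · intro h
    refine ⟨?_, h⟩
    rcases h with rfl | rfl | rfl <;> constructor <;> linarith

theorem c1Dist_tiltedCubic_le {δ : ℝ} (hδ : 0 ≤ δ) :
    (⨆ x : Icc (x₀ - δ) (x₀ + δ), |tiltedCubic x₀ s x - (x - x₀) ^ 3| +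
        |deriv (tiltedCubic x₀ s) x - deriv (fun y => (y - x₀) ^ 3) x|) ≤ s ^ 2 * (δ + 1) := by
  refine Real.iSup_le (fun ⟨x, hx⟩ => ?_) (by positivity)
  have hxδ : |x - x₀| ≤ δ := abs_le.2 ⟨by linarith [hx.1], by linarith [hx.2]⟩
  calc |tiltedCubic x₀ s x - (x - x₀) ^ 3| +
        |deriv (tiltedCubic x₀ s) x - deriv (fun y => (y - x₀) ^ 3) x|
      = s ^ 2 * |x - x₀| + s ^ 2 := by
        rw [deriv_tiltedCubic, (hasDerivAt_sub_pow_three x₀ x).deriv, tiltedCubic,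
          show (x - x₀) ^ 3 - s ^ 2 * (x - x₀) - (x - x₀) ^ 3 = -(s ^ 2 * (x - x₀)) by ring,
          show 3 * (x - x₀) ^ 2 - s ^ 2 - 3 * (x - x₀) ^ 2 = -s ^ 2 by ring,
          abs_neg, abs_neg, abs_mul, abs_of_nonneg (sq_nonneg s)]
    _ ≤ s ^ 2 * (δ + 1) := by nlinarith [sq_nonneg s]

end

theorem cubic_perturbed_three_hyperbolic_zeros (x₀ δ : ℝ) (hδ : 0 < δ) :
    ∀ ε > (0 : ℝ), ∃ g : ℝ → ℝ, ContDiff ℝ 1 g ∧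
      (⨆ x : Set.Icc (x₀ - δ) (x₀ + δ),
        |g x - (x - x₀) ^ 3| + |deriv g x - deriv (fun y => (y - x₀) ^ 3) x|) < ε ∧
      ∃ a b : ℝ, a ∈ Set.Ioo (x₀ - δ) (x₀ + δ) ∧ b ∈ Set.Ioo (x₀ - δ) (x₀ + δ) ∧
        a < x₀ ∧ x₀ < b ∧
        {y ∈ Set.Ioo (x₀ - δ) (x₀ + δ) | g y = 0} = {a, x₀, b} ∧
        deriv g x₀ < 0 ∧ 0 < deriv g a ∧ 0 < deriv g b := by
  intro ε hε
  obtain ⟨s, hs, hsδ, hsε⟩ := exists_small_tilt hδ hε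
  refine ⟨tiltedCubic x₀ s, contDiff_tiltedCubic x₀ s,
    (c1Dist_tiltedCubic_le x₀ s hδ.le).trans_lt hsε, x₀ - s, x₀ + s,
    ⟨by linarith, by linarith⟩, ⟨by linarith, by linarith⟩, by linarith, by linarith,
    tiltedCubic_zeros_Ioo x₀ s hs hsδ, ?_, ?_, ?_⟩ <;>
  · rw [deriv_tiltedCubic]
    nlinarith
end
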